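/- arXiv:1303.2467 — 2 statements merged into one kernel-verified Lean document; each statement's English description precedes it below -/
import Mathlib

section
/- If S is a Λ-n-simulation between T-coalgebras C and D and x S y, then for every positive Λ-formula φ of rank at most n, x ⊨ φ implies y ⊨ φ. -/
open CategoryTheory

universe u

structure PredLifting (T : Type u ⥤ Type u) where
  app : ∀ X : Type u, Set X → Set (T.obj X)
  natural : ∀ {X Y : Type u} (f : X → Y) (A : Set Y),
    app X (f ⁻¹' A) = T.map (TypeCat.ofHom f) ⁻¹' app Y A
  mono : ∀ (X : Type u) ⦃A B : Set X⦄, A ⊆ B → app X A ⊆ app X B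

def RelImage {X Y : Type u} (S : X → Y → Prop) (A : Set X) : Set Y :=
  {y | ∃ x ∈ A, S x y}

def IsSim {T : Type u ⥤ Type u} (Λ : Set (PredLifting T))
    {X Y : Type u} (ξ : X → T.obj X) (ζ : Y → T.obj Y)
    (S : X → Y → Prop) : Prop :=
  ∀ x y, S x y → ∀ L ∈ Λ, ∀ A : Set X,
    ξ x ∈ L.app X A → ζ y ∈ L.app Y (RelImage S A)

inductive PosForm {T : Type u ⥤ Type u} (Λ : Set (PredLifting T)) : Type (u+1) where
  | top : PosForm Λ
  | bot : PosForm Λ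
  | and : PosForm Λ → PosForm Λ → PosForm Λ
  | or : PosForm Λ → PosForm Λ → PosForm Λ
  | mod : Λ → PosForm Λ → PosForm Λ

def PosSat {T : Type u ⥤ Type u} {Λ : Set (PredLifting T)} {X : Type u}
    (ξ : X → T.obj X) : PosForm Λ → X → Prop
  | .top => fun _ => True
  | .bot => fun _ => False
  | .and φ ψ => fun x => PosSat ξ φ x ∧ PosSat ξ ψ x
  | .or φ ψ => fun x => PosSat ξ φ x ∨ PosSat ξ ψ x
  | .mod L φ => fun x => ξ x ∈ (L : PredLifting T).app X {z | PosSat ξ φ z}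

def PosRank {T : Type u ⥤ Type u} {Λ : Set (PredLifting T)} : PosForm Λ → ℕ
  | .top => 0
  | .bot => 0
  | .and φ ψ => max (PosRank φ) (PosRank ψ)
  | .or φ ψ => max (PosRank φ) (PosRank ψ)
  | .mod _ φ => PosRank φ + 1

def IsNSim {T : Type u ⥤ Type u} (Λ : Set (PredLifting T))
    {X Y : Type u} (ξ : X → T.obj X) (ζ : Y → T.obj Y) :
    ℕ → (X → Y → Prop) → Prop
  | 0, _ => True
  | n + 1, S => ∃ S' : X → Y → Prop, IsNSim Λ ξ ζ n S' ∧
      (∀ x y, S x y → S' x y) ∧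
      ∀ x y, S x y → ∀ L ∈ Λ, ∀ A : Set X,
        ξ x ∈ L.app X A → ζ y ∈ L.app Y (RelImage S' A)

section Preservation

variable {T : Type u ⥤ Type u} {Λ : Set (PredLifting T)} {X Y : Type u}
  {ξ : X → T.obj X} {ζ : Y → T.obj Y}

theorem relImage_subset_iff {S : X → Y → Prop} {A : Set X} {B : Set Y} :
    RelImage S A ⊆ B ↔ ∀ x ∈ A, ∀ y, S x y → y ∈ B :=
  ⟨fun h x hx _ hxy => h ⟨x, hx, hxy⟩, fun h _ ⟨x, hx, hxy⟩ => h x hx _ hxy⟩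

theorem IsNSim.posSat_mod {n : ℕ} {S : X → Y → Prop} (hS : IsNSim Λ ξ ζ (n + 1) S)
    {L : Λ} {φ : PosForm Λ}
    (ih : ∀ S', IsNSim Λ ξ ζ n S' → ∀ x y, S' x y → PosSat ξ φ x → PosSat ζ φ y)
    {x : X} {y : Y} (hxy : S x y) (hx : PosSat ξ (.mod L φ) x) :
    PosSat ζ (.mod L φ) y := by
  obtain ⟨S', hS', -, hstep⟩ := hS
  have hpush : RelImage S' {z | PosSat ξ φ z} ⊆ {w | PosSat ζ φ w} :=
    relImage_subset_iff.2 fun z hz w hzw => ih S' hS' z w hzw hz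
  exact (L : PredLifting T).mono Y hpush (hstep x y hxy L L.2 _ hx)

end Preservation

theorem lambda_n_sim_preserves_positive {T : Type u ⥤ Type u}
    {Λ : Set (PredLifting T)} {X Y : Type u}
    (ξ : X → T.obj X) (ζ : Y → T.obj Y) (S : X → Y → Prop) (n : ℕ)
    (hS : IsNSim Λ ξ ζ n S) {x : X} {y : Y} (hxy : S x y)
    (φ : PosForm Λ) (hrank : PosRank φ ≤ n)
    (hx : PosSat ξ φ x) : PosSat ζ φ y := by
  induction φ generalizing n S x y with
  | top => trivial
  | bot => exact hx
  | and φ ψ ihφ ihψ =>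
    rw [PosRank, max_le_iff] at hrank
    exact ⟨ihφ S n hS hxy hrank.1 hx.1, ihψ S n hS hxy hrank.2 hx.2⟩
  | or φ ψ ihφ ihψ =>
    rw [PosRank, max_le_iff] at hrank
    exact hx.imp (ihφ S n hS hxy hrank.1) (ihψ S n hS hxy hrank.2)
  | mod L φ ih =>
    cases n with
    | zero => exact absurd hrank (Nat.not_succ_le_zero _)
    | succ k =>
      have hrank' : PosRank φ ≤ k := Nat.succ_le_succ_iff.mp hrank
      exact hS.posSat_mod (fun S' hS' _ _ h => ih S' k hS' h hrank') hxy hx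
end

section
/- If C and D are T-coalgebras and f : C → D is a coalgebra morphism, then the graph of f is a Λ-bisimulation (i.e., both the graph and its converse are Λ-simulations). -/
open CategoryTheory

universe u

/-- `f` is a coalgebra morphism. -/
def IsCoalgMor {T : Type u ⥤ Type u} {X Y : Type u}
    (ξ : X → T.obj X) (ζ : Y → T.obj Y) (f : X → Y) : Prop :=
  ∀ x, ζ (f x) = T.map (TypeCat.ofHom f) (ξ x)

namespace PredLifting

variable {T : Type u ⥤ Type u} (L : PredLifting T)

theorem mem_app_preimage_iff {X Y : Type u} (f : X → Y) (A : Set Y) (t : T.obj X) :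
    t ∈ L.app X (f ⁻¹' A) ↔ T.map (TypeCat.ofHom f) t ∈ L.app Y A := by
  rw [L.natural]
  rfl

end PredLifting

theorem relImage_graph {X Y : Type u} (f : X → Y) (A : Set X) :
    RelImage (fun x y => f x = y) A = f '' A :=
  rfl

theorem relImage_graph_symm {X Y : Type u} (f : X → Y) (B : Set Y) :
    RelImage (fun y x => f x = y) B = f ⁻¹' B := by
  ext x
  simp [RelImage]

namespace IsCoalgMor

variable {T : Type u ⥤ Type u} {X Y : Type u} {ξ : X → T.obj X} {ζ : Y → T.obj Y} {f : X → Y}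

theorem mem_app_iff (hf : IsCoalgMor ξ ζ f) (L : PredLifting T) (x : X) (B : Set Y) :
    ζ (f x) ∈ L.app Y B ↔ ξ x ∈ L.app X (f ⁻¹' B) := by
  rw [hf x, L.mem_app_preimage_iff]

theorem isSim_graph (hf : IsCoalgMor ξ ζ f) (Λ : Set (PredLifting T)) :
    IsSim Λ ξ ζ (fun x y => f x = y) := by
  rintro x _ rfl L - A hA
  rw [relImage_graph, hf.mem_app_iff]
  exact L.mono X (Set.subset_preimage_image f A) hA

theorem isSim_graph_symm (hf : IsCoalgMor ξ ζ f) (Λ : Set (PredLifting T)) :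
    IsSim Λ ζ ξ (fun y x => f x = y) := by
  rintro _ x rfl L - B hB
  rwa [relImage_graph_symm, ← hf.mem_app_iff]

end IsCoalgMor

theorem graph_of_morphism_is_bisimulation {T : Type u ⥤ Type u}
    (Λ : Set (PredLifting T)) {X Y : Type u}
    (ξ : X → T.obj X) (ζ : Y → T.obj Y) (f : X → Y)
    (hf : IsCoalgMor ξ ζ f) :
    IsSim Λ ξ ζ (fun x y => f x = y) ∧
      IsSim Λ ζ ξ (fun y x => f x = y) :=
  ⟨hf.isSim_graph Λ, hf.isSim_graph_symm Λ⟩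
end
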